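/- Closed types of the same shape form a lattice under subtyping, with union as join and intersection as meet. -/

import Mathlib

/-- Operations are pairs (instance, operation symbol). -/
abbrev Operation := ℕ × ℕ
/-- A dirt is a finite set of operations. -/
abbrev Dirt := Finset Operation
/-- A region is a finite set of instances. -/
abbrev Region := Finset ℕ

/-- Closed core Eff types: ground types, function types `A → (B ! Δ)`,
effect types `E^R` and handler types `(A ! Δ₁) ⇒ (B ! Δ₂)`. -/
inductive Ty : Type where
  | bool : Ty
  | nat : Ty
  | unit : Ty
  | empty : Ty
  | fn : Ty → Ty → Dirt → Ty
  | eff : ℕ → Region → Ty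
  | hand : Ty → Dirt → Ty → Dirt → Ty
  deriving DecidableEq

/-- Dirty types `A ! Δ`. -/
abbrev DirtyTy := Ty × Dirt

/-- Structural subtyping on core Eff types. -/
inductive SubTy : Ty → Ty → Prop where
  | bool : SubTy .bool .bool
  | nat : SubTy .nat .nat
  | unit : SubTy .unit .unit
  | empty : SubTy .empty .empty
  | fn {A A' B B' : Ty} {Δ Δ' : Dirt} :
      SubTy A' A → SubTy B B' → Δ ⊆ Δ' → SubTy (.fn A B Δ) (.fn A' B' Δ')
  | eff {E : ℕ} {R R' : Region} : R ⊆ R' → SubTy (.eff E R) (.eff E R')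
  | hand {A A' B B' : Ty} {Δ₁ Δ₁' Δ₂ Δ₂' : Dirt} :
      SubTy A' A → Δ₁' ⊆ Δ₁ → SubTy B B' → Δ₂ ⊆ Δ₂' →
      SubTy (.hand A Δ₁ B Δ₂) (.hand A' Δ₁' B' Δ₂')

/-- Subtyping of dirty types: `A ! Δ ≤ A' ! Δ'` iff `A ≤ A'` and `Δ ⊆ Δ'`. -/
def SubD (C C' : DirtyTy) : Prop := SubTy C.1 C'.1 ∧ C.2 ⊆ C'.2

/-- Two types have the same shape iff they differ only in regions and dirts. -/
def SameShape : Ty → Ty → Prop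
  | .bool, .bool => True
  | .nat, .nat => True
  | .unit, .unit => True
  | .empty, .empty => True
  | .fn A B _, .fn A' B' _ => SameShape A A' ∧ SameShape B B'
  | .eff E _, .eff E' _ => E = E'
  | .hand A _ B _, .hand A' _ B' _ => SameShape A A' ∧ SameShape B B'
  | _, _ => False

mutual
/-- Union of two closed types of the same shape (junk on mismatched shapes). -/
def tyUnion : Ty → Ty → Ty
  | .fn A B Δ, .fn A' B' Δ' => .fn (tyInter A A') (tyUnion B B') (Δ ∪ Δ')
  | .eff E R, .eff _ R' => .eff E (R ∪ R')
  | .hand A Δ₁ B Δ₂, .hand A' Δ₁' B' Δ₂' =>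
      .hand (tyInter A A') (Δ₁ ∩ Δ₁') (tyUnion B B') (Δ₂ ∪ Δ₂')
  | A, _ => A
/-- Intersection of two closed types of the same shape (junk on mismatched shapes). -/
def tyInter : Ty → Ty → Ty
  | .fn A B Δ, .fn A' B' Δ' => .fn (tyUnion A A') (tyInter B B') (Δ ∩ Δ')
  | .eff E R, .eff _ R' => .eff E (R ∩ R')
  | .hand A Δ₁ B Δ₂, .hand A' Δ₁' B' Δ₂' =>
      .hand (tyUnion A A') (Δ₁ ∪ Δ₁') (tyInter B B') (Δ₂ ∩ Δ₂')
  | A, _ => A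
end

/-!
A shape fixes a type up to its regions and dirts, and subtyping compares those componentwise by
inclusion, reversed at the contravariant positions (function arguments and handler incoming types).
So the types of one shape form a product of lattices of finite sets and of their order duals,
whose join and meet are computed pointwise; `tyUnion` and `tyInter` compute exactly these,
which is why they swap at contravariant positions.
-/

namespace SameShape

theorem symm {A B : Ty} (h : SameShape A B) : SameShape B A := by
  induction A generalizing B <;> cases B <;> simp_all [SameShape]

theorem trans {A B C : Ty} (hAB : SameShape A B) (hBC : SameShape B C) : SameShape A C := by
  induction A generalizing B C with
  | fn _ _ _ ihA ihB | hand _ _ _ _ ihA ihB =>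
    cases B <;> cases C <;> simp only [SameShape] at hAB hBC ⊢
    exact ⟨ihA hAB.1 hBC.1, ihB hAB.2 hBC.2⟩
  | _ => cases B <;> cases C <;> simp_all [SameShape]

end SameShape

namespace SubTy

@[refl]
theorem refl : ∀ A : Ty, SubTy A A
  | .bool => .bool
  | .nat => .nat
  | .unit => .unit
  | .empty => .empty
  | .fn A B _ => .fn (refl A) (refl B) subset_rfl
  | .eff _ _ => .eff subset_rfl
  | .hand A _ B _ => .hand (refl A) subset_rfl (refl B) subset_rfl

theorem trans {A B C : Ty} (hAB : SubTy A B) (hBC : SubTy B C) : SubTy A C := by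
  induction B generalizing A C with
  | fn _ _ _ ihA ihB =>
    cases hAB with | fn hA hB hΔ =>
    cases hBC with | fn hA' hB' hΔ' =>
    exact .fn (ihA hA' hA) (ihB hB hB') (hΔ.trans hΔ')
  | eff =>
    cases hAB with | eff hR =>
    cases hBC with | eff hR' =>
    exact .eff (hR.trans hR')
  | hand _ _ _ _ ihA ihB =>
    cases hAB with | hand hA hΔ₁ hB hΔ₂ =>
    cases hBC with | hand hA' hΔ₁' hB' hΔ₂' =>
    exact .hand (ihA hA' hA) (hΔ₁'.trans hΔ₁) (ihB hB hB') (hΔ₂.trans hΔ₂')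
  | _ => cases hAB; exact hBC

theorem antisymm {A B : Ty} (hAB : SubTy A B) (hBA : SubTy B A) : A = B := by
  induction hAB with
  | fn _ _ hΔ ihA ihB =>
    cases hBA with | fn hA hB hΔ' =>
    rw [ihA hA, ihB hB, hΔ.antisymm hΔ']
  | eff hR =>
    cases hBA with | eff hR' =>
    rw [hR.antisymm hR']
  | hand _ hΔ₁ _ hΔ₂ ihA ihB =>
    cases hBA with | hand hA hΔ₁' hB hΔ₂' =>
    rw [ihA hA, ihB hB, hΔ₁.antisymm hΔ₁', hΔ₂.antisymm hΔ₂']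
  | _ => rfl

theorem sameShape {A B : Ty} (h : SubTy A B) : SameShape A B := by
  induction h with
  | fn _ _ _ ihA ihB => exact ⟨ihA.symm, ihB⟩
  | hand _ _ _ _ ihA ihB => exact ⟨ihA.symm, ihB⟩
  | _ => trivial

end SubTy

/- At contravariant positions the union of types is built from the intersection of the
argument types and vice versa, so the union and intersection statements are proved together. -/
open Finset in
theorem subTy_tyUnion_and_tyInter_subTy {A B : Ty} (h : SameShape A B) :
    (SubTy A (tyUnion A B) ∧ SubTy B (tyUnion A B)) ∧
      SubTy (tyInter A B) A ∧ SubTy (tyInter A B) B := by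
  induction A generalizing B with
  | fn _ _ _ ihA ihB =>
    cases B <;> simp only [SameShape] at h
    obtain ⟨⟨uA₁, uA₂⟩, iA₁, iA₂⟩ := ihA h.1
    obtain ⟨⟨uB₁, uB₂⟩, iB₁, iB₂⟩ := ihB h.2
    exact ⟨⟨.fn iA₁ uB₁ subset_union_left, .fn iA₂ uB₂ subset_union_right⟩,
      .fn uA₁ iB₁ inter_subset_left, .fn uA₂ iB₂ inter_subset_right⟩
  | eff =>
    cases B <;> simp only [SameShape] at h
    subst h
    exact ⟨⟨.eff subset_union_left, .eff subset_union_right⟩,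
      .eff inter_subset_left, .eff inter_subset_right⟩
  | hand _ _ _ _ ihA ihB =>
    cases B <;> simp only [SameShape] at h
    obtain ⟨⟨uA₁, uA₂⟩, iA₁, iA₂⟩ := ihA h.1
    obtain ⟨⟨uB₁, uB₂⟩, iB₁, iB₂⟩ := ihB h.2
    exact ⟨⟨.hand iA₁ inter_subset_left uB₁ subset_union_left,
        .hand iA₂ inter_subset_right uB₂ subset_union_right⟩,
      .hand uA₁ subset_union_left iB₁ inter_subset_left,
      .hand uA₂ subset_union_right iB₂ inter_subset_right⟩
  | _ =>
    cases B <;> simp only [SameShape] at h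
    exact ⟨⟨.refl _, .refl _⟩, .refl _, .refl _⟩

open Finset in
theorem tyUnion_subTy_and_subTy_tyInter {A B C : Ty} :
    (SubTy A C → SubTy B C → SubTy (tyUnion A B) C) ∧
      (SubTy C A → SubTy C B → SubTy C (tyInter A B)) := by
  induction A generalizing B C with
  | fn _ _ _ ihA ihB =>
    constructor
    · intro h h'
      cases h with | fn hA hB hΔ =>
      cases h' with | fn hA' hB' hΔ' =>
      exact .fn (ihA.2 hA hA') (ihB.1 hB hB') (union_subset hΔ hΔ')
    · intro h h'
      cases h with | fn hA hB hΔ =>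
      cases h' with | fn hA' hB' hΔ' =>
      exact .fn (ihA.1 hA hA') (ihB.2 hB hB') (subset_inter hΔ hΔ')
  | eff =>
    constructor
    · intro h h'
      cases h with | eff hR =>
      cases h' with | eff hR' =>
      exact .eff (union_subset hR hR')
    · intro h h'
      cases h with | eff hR =>
      cases h' with | eff hR' =>
      exact .eff (subset_inter hR hR')
  | hand _ _ _ _ ihA ihB =>
    constructor
    · intro h h'
      cases h with | hand hA hΔ₁ hB hΔ₂ =>
      cases h' with | hand hA' hΔ₁' hB' hΔ₂' =>
      exact .hand (ihA.2 hA hA') (subset_inter hΔ₁ hΔ₁') (ihB.1 hB hB') (union_subset hΔ₂ hΔ₂')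
    · intro h h'
      cases h with | hand hA hΔ₁ hB hΔ₂ =>
      cases h' with | hand hA' hΔ₁' hB' hΔ₂' =>
      exact .hand (ihA.1 hA hA') (union_subset hΔ₁ hΔ₁') (ihB.2 hB hB') (subset_inter hΔ₂ hΔ₂')
  | _ =>
    constructor <;> intro h h' <;> cases h <;> cases h' <;> exact .refl _

abbrev shapeLattice (A₀ : Ty) : Lattice {A : Ty // SameShape A A₀} :=
  have bounds (x y : {A : Ty // SameShape A A₀}) :=
    subTy_tyUnion_and_tyInter_subTy (x.2.trans y.2.symm)
  { le x y := SubTy x.1 y.1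
    le_refl x := .refl x.1
    le_trans _ _ _ := .trans
    le_antisymm _ _ hxy hyx := Subtype.ext (hxy.antisymm hyx)
    sup x y := ⟨tyUnion x.1 y.1, (bounds x y).1.1.sameShape.symm.trans x.2⟩
    le_sup_left x y := (bounds x y).1.1
    le_sup_right x y := (bounds x y).1.2
    sup_le _ _ _ := tyUnion_subTy_and_subTy_tyInter.1
    inf x y := ⟨tyInter x.1 y.1, (bounds x y).2.1.sameShape.trans x.2⟩
    inf_le_left x y := (bounds x y).2.1
    inf_le_right x y := (bounds x y).2.2
    le_inf _ _ _ := tyUnion_subTy_and_subTy_tyInter.2 }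

/-- Closed types of a fixed shape form a lattice under subtyping,
with union as join and intersection as meet. -/
theorem sameShape_lattice (A₀ : Ty) :
    ∃ L : Lattice {A : Ty // SameShape A A₀},
      ∀ x y : {A : Ty // SameShape A A₀},
        (L.toSemilatticeSup.le x y ↔ SubTy x.1 y.1) ∧
        (L.toSemilatticeSup.sup x y).1 = tyUnion x.1 y.1 ∧
        ((@Lattice.toSemilatticeInf _ L).inf x y).1 = tyInter x.1 y.1 :=
  ⟨shapeLattice A₀, fun _ _ => ⟨Iff.rfl, rfl, rfl⟩⟩
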